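/- Let N ≥ 1, let S ⊆ ℝ^N be compact, let D ⊆ ℝ^N be a bounded measurable set, and let ψ_0, …, ψ_{N'} be an orthonormal family in B_S consisting of eigenfunctions of the operator A_D : B_S → B_S, A_D f = P_S(χ_D f), with eigenvalues λ_0, …, λ_{N'} ∈ (0,1) satisfying λ_0 ≥ λ_n ≥ λ_{N'} for all 0 ≤ n ≤ N'. Let μ > 0 and 0 < τ ≤ 2/(λ_0 + λ_{N'} + 2μ). Let h be in the linear span V of ψ_0, …, ψ_{N'} and suppose the regularized operator \hat{T}_h^{(D)} f = P_S((1 − μτ) f + τ χ_D(h − f)) maps V into V. Then \hat{T}_h^{(D)} is a Banach contraction on V with Lipschitz constant |1 − τ(λ_{N'} + μ)|: for all f, g ∈ V, ‖\hat{T}_h^{(D)} f − \hat{T}_h^{(D)} g‖ ≤ |1 − τ(λ_{N'} + μ)| · ‖f − g‖, and |1 − τ(λ_{N'} + μ)| < 1. -/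

import Mathlib

/-!
For `f, g ∈ V` the inhomogeneous term cancels: `T̂_h f − T̂_h g = P_S((1 − μτ)(f − g) − τ χ_D(f − g))`.
This linear operator acts diagonally on the orthonormal eigenbasis `ψ_n`, with eigenvalues
`1 − τ(λ_n + μ)`. The step-size bound `τ(λ_0 + λ_{N'} + 2μ) ≤ 2` places all of them in
`[−(1 − τ(λ_{N'} + μ)), 1 − τ(λ_{N'} + μ)]`, so Parseval's identity gives the Lipschitz constant,
which is `< 1` because `λ_{N'} + μ > 0`.
-/

open MeasureTheory FourierTransform Filter

noncomputable section

/-- The Hilbert space `L²(ℝᴺ; ℂ)` of square-integrable functions on `ℝᴺ`. -/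
abbrev L2Space (N : ℕ) : Type :=
  Lp ℂ 2 (volume : Measure (EuclideanSpace ℝ (Fin N)))

/-- `f ∈ L²(ℝᴺ)` is bandlimited to `S`: its Fourier transform vanishes (a.e.) outside `S`;
equivalently, `f` agrees a.e. with the inverse Fourier transform of an integrable function `F`
vanishing outside `S`. -/
def IsBandlimited {N : ℕ} (S : Set (EuclideanSpace ℝ (Fin N))) (f : L2Space N) : Prop :=
  ∃ F : EuclideanSpace ℝ (Fin N) → ℂ,
    Integrable F ∧ (∀ k, k ∉ S → F k = 0) ∧
      (f : EuclideanSpace ℝ (Fin N) → ℂ) =ᵐ[volume] 𝓕⁻ F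

/-- Multiplication of `f ∈ L²` by the indicator function `χ_D`, as an element of `L²`. -/
def chiMul {N : ℕ} {D : Set (EuclideanSpace ℝ (Fin N))} (hD : MeasurableSet D)
    (f : L2Space N) : L2Space N :=
  ((Lp.memLp f).indicator hD).toLp (D.indicator f)

/-- The orthogonal projection of `L²(ℝᴺ)` onto a closed subspace `K`. -/
def projOf {N : ℕ} (K : Submodule ℂ (L2Space N)) (hK : IsClosed (K : Set (L2Space N))) :
    L2Space N → L2Space N :=
  haveI : CompleteSpace K := hK.completeSpace_coe
  fun f => (K.orthogonalProjection f : L2Space N)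

/-- The operator `T_h^{(D)} f = P_S (f + χ_D (h − f))` (single region). -/
def Tsingle {N : ℕ} (K : Submodule ℂ (L2Space N)) (hK : IsClosed (K : Set (L2Space N)))
    {D : Set (EuclideanSpace ℝ (Fin N))} (hD : MeasurableSet D)
    (h f : L2Space N) : L2Space N :=
  projOf K hK (f + chiMul hD (h - f))

/-- The regularized operator `T̂_h^{(D)} f = P_S ((1 − μτ) f + τ χ_D (h − f))`. -/
def TsingleReg {N : ℕ} (K : Submodule ℂ (L2Space N)) (hK : IsClosed (K : Set (L2Space N)))
    {D : Set (EuclideanSpace ℝ (Fin N))} (hD : MeasurableSet D)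
    (μ τ : ℝ) (h f : L2Space N) : L2Space N :=
  projOf K hK ((1 - μ * τ) • f + τ • chiMul hD (h - f))

theorem Orthonormal.norm_sum_smul_sq {𝕜 E ι : Type*} [RCLike 𝕜] [NormedAddCommGroup E]
    [InnerProductSpace 𝕜 E] {v : ι → E} (hv : Orthonormal 𝕜 v) (l : ι → 𝕜) (s : Finset ι) :
    ‖∑ i ∈ s, l i • v i‖ ^ 2 = ∑ i ∈ s, ‖l i‖ ^ 2 := by
  simpa using hv.orthogonalFamily.norm_sum l s

theorem Orthonormal.norm_apply_le_of_apply_eq_smul {𝕜 E ι : Type*} [RCLike 𝕜]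
    [NormedAddCommGroup E] [InnerProductSpace 𝕜 E] [Fintype ι] {v : ι → E}
    (hv : Orthonormal 𝕜 v) (T : E →ₗ[𝕜] E) {c : ι → 𝕜} (hT : ∀ i, T (v i) = c i • v i)
    {C : ℝ} (hC0 : 0 ≤ C) (hC : ∀ i, ‖c i‖ ≤ C) {u : E}
    (hu : u ∈ Submodule.span 𝕜 (Set.range v)) : ‖T u‖ ≤ C * ‖u‖ := by
  obtain ⟨l, rfl⟩ := (Submodule.mem_span_range_iff_exists_fun 𝕜).mp hu
  have hTu : T (∑ i, l i • v i) = ∑ i, (c i * l i) • v i := by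
    simp only [map_sum, map_smul, hT, smul_smul, mul_comm]
  rw [← pow_le_pow_iff_left₀ (norm_nonneg _) (by positivity) two_ne_zero, hTu, mul_pow,
    hv.norm_sum_smul_sq, hv.norm_sum_smul_sq, Finset.mul_sum]
  gcongr with i
  rw [norm_mul, mul_pow]
  gcongr
  exact hC i

theorem abs_one_sub_mul_le_of_mem_Icc {a b x τ : ℝ} (hx : x ∈ Set.Icc a b) (hτ0 : 0 ≤ τ)
    (hτ : τ * (a + b) ≤ 2) : |1 - τ * x| ≤ 1 - τ * a := by
  obtain ⟨hax, hxb⟩ := hx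
  rw [abs_le]
  constructor <;> nlinarith [mul_le_mul_of_nonneg_left hax hτ0, mul_le_mul_of_nonneg_left hxb hτ0]

section chiMul

variable {N : ℕ} {D : Set (EuclideanSpace ℝ (Fin N))} (hD : MeasurableSet D)

theorem coeFn_chiMul (f : L2Space N) : chiMul hD f =ᵐ[volume] D.indicator f :=
  MemLp.coeFn_toLp _

theorem chiMul_add (f g : L2Space N) : chiMul hD (f + g) = chiMul hD f + chiMul hD g := by
  refine Lp.ext ?_
  filter_upwards [coeFn_chiMul hD (f + g), coeFn_chiMul hD f, coeFn_chiMul hD g,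
    Lp.coeFn_add f g, Lp.coeFn_add (chiMul hD f) (chiMul hD g)] with x hfg hf hg hadd hadd'
  rw [hfg, hadd', Pi.add_apply, hf, hg]
  by_cases hx : x ∈ D
  · simp only [Set.indicator_of_mem hx]
    exact hadd
  · simp only [Set.indicator_of_notMem hx, add_zero]

theorem chiMul_smul (c : ℂ) (f : L2Space N) : chiMul hD (c • f) = c • chiMul hD f := by
  refine Lp.ext ?_
  filter_upwards [coeFn_chiMul hD (c • f), coeFn_chiMul hD f, Lp.coeFn_smul c f,
    Lp.coeFn_smul c (chiMul hD f)] with x hcf hf hsmul hsmul'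
  rw [hcf, hsmul', Pi.smul_apply, hf]
  by_cases hx : x ∈ D
  · simp only [Set.indicator_of_mem hx]
    exact hsmul
  · simp only [Set.indicator_of_notMem hx, smul_zero]

def chiMulₗ : L2Space N →ₗ[ℂ] L2Space N where
  toFun := chiMul hD
  map_add' := chiMul_add hD
  map_smul' := chiMul_smul hD

theorem chiMulₗ_apply (f : L2Space N) : chiMulₗ hD f = chiMul hD f := rfl

theorem chiMul_sub (f g : L2Space N) : chiMul hD (f - g) = chiMul hD f - chiMul hD g :=
  (chiMulₗ hD).map_sub f g

variable {K : Submodule ℂ (L2Space N)} (hK : IsClosed (K : Set (L2Space N)))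

def TsingleRegLinear (μ τ : ℝ) : L2Space N →ₗ[ℂ] L2Space N :=
  haveI : CompleteSpace K := hK.completeSpace_coe
  K.starProjection.toLinearMap ∘ₗ ((1 - μ * τ) • LinearMap.id - τ • chiMulₗ hD)

theorem TsingleReg_sub_TsingleReg (μ τ : ℝ) (h f g : L2Space N) :
    TsingleReg K hK hD μ τ h f - TsingleReg K hK hD μ τ h g =
      TsingleRegLinear hD hK μ τ (f - g) := by
  have : CompleteSpace K := hK.completeSpace_coe
  change K.starProjection _ - K.starProjection _ = K.starProjection _
  rw [← map_sub]
  congr 1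
  simp only [LinearMap.sub_apply, LinearMap.smul_apply, LinearMap.id_apply, chiMulₗ_apply,
    chiMul_sub]
  module

theorem TsingleRegLinear_apply_eq_smul (μ τ : ℝ) {ψ : L2Space N} {lam : ℝ} (hψ : ψ ∈ K)
    (heig : projOf K hK (chiMul hD ψ) = (lam : ℂ) • ψ) :
    TsingleRegLinear hD hK μ τ ψ = ((1 - τ * (lam + μ) : ℝ) : ℂ) • ψ := by
  have : CompleteSpace K := hK.completeSpace_coe
  change K.starProjection _ = _
  change K.starProjection _ = _ at heig
  simp only [LinearMap.sub_apply, LinearMap.smul_apply, LinearMap.id_apply, chiMulₗ_apply,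
    map_sub, ContinuousLinearMap.map_smul_of_tower, heig,
    Submodule.starProjection_eq_self_iff.mpr hψ]
  module

end chiMul

theorem truncated_pswf_regularized_contraction_general (N : ℕ)
    (S : Set (EuclideanSpace ℝ (Fin N)))
    (K : Submodule ℂ (L2Space N))
    (hKset : (K : Set (L2Space N)) = {f : L2Space N | IsBandlimited S f})
    (hK : IsClosed (K : Set (L2Space N)))
    (D : Set (EuclideanSpace ℝ (Fin N))) (hD : MeasurableSet D)
    (n' : ℕ) (ψ : Fin (n' + 1) → L2Space N) (hψmem : ∀ n, IsBandlimited S (ψ n))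
    (hψon : Orthonormal ℂ ψ)
    (lam : Fin (n' + 1) → ℝ) (hlam : ∀ n, lam n ∈ Set.Ioo (0 : ℝ) 1)
    (horder : ∀ n, lam (Fin.last n') ≤ lam n ∧ lam n ≤ lam 0)
    (heig : ∀ n, projOf K hK (chiMul hD (ψ n)) = (lam n : ℂ) • ψ n)
    (μ τ : ℝ) (hμ : 0 < μ) (hτ0 : 0 < τ)
    (hτ : τ ≤ 2 / (lam 0 + lam (Fin.last n') + 2 * μ))
    (h : L2Space N) :
    (∀ f g : L2Space N, f ∈ Submodule.span ℂ (Set.range ψ) →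
        g ∈ Submodule.span ℂ (Set.range ψ) →
          ‖TsingleReg K hK hD μ τ h f - TsingleReg K hK hD μ τ h g‖ ≤
            |1 - τ * (lam (Fin.last n') + μ)| * ‖f - g‖) ∧
      |1 - τ * (lam (Fin.last n') + μ)| < 1 := by
  have hψK : ∀ n, ψ n ∈ K := fun n => by
    rw [← SetLike.mem_coe, hKset]
    exact hψmem n
  have hτ' : τ * ((lam (Fin.last n') + μ) + (lam 0 + μ)) ≤ 2 := by
    rw [le_div_iff₀ (by linarith [(hlam 0).1, (hlam (Fin.last n')).1])] at hτ
    linarith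
  have hbound (n) : |1 - τ * (lam n + μ)| ≤ 1 - τ * (lam (Fin.last n') + μ) :=
    abs_one_sub_mul_le_of_mem_Icc ⟨by linarith [(horder n).1], by linarith [(horder n).2]⟩
      hτ0.le hτ'
  rw [abs_of_nonneg ((abs_nonneg _).trans (hbound (Fin.last n')))]
  refine ⟨fun f g hf hg => ?_, by nlinarith [(hlam (Fin.last n')).1]⟩
  rw [TsingleReg_sub_TsingleReg]
  refine hψon.norm_apply_le_of_apply_eq_smul _
    (fun n => TsingleRegLinear_apply_eq_smul hD hK μ τ (hψK n) (heig n))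
    ((abs_nonneg _).trans (hbound 0)) (fun n => ?_) (Submodule.sub_mem _ hf hg)
  rw [Complex.norm_real, Real.norm_eq_abs]
  exact hbound n

/-- Let `ψ_0, …, ψ_{N'}` be an orthonormal family in `B_S` of eigenfunctions
of `A_D f = P_S(χ_D f)` with eigenvalues `λ_n ∈ (0,1)` satisfying `λ_0 ≥ λ_n ≥ λ_{N'}`.
Let `μ > 0` and `0 < τ ≤ 2/(λ_0 + λ_{N'} + 2μ)`. If `h` lies in the span `V` of the `ψ_n`
and the regularized operator `T̂_h^{(D)} f = P_S((1 − μτ) f + τ χ_D(h − f))` maps `V` into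
`V`, then it is a Banach contraction on `V` with Lipschitz constant
`|1 − τ(λ_{N'} + μ)| < 1`. -/
theorem truncated_pswf_regularized_contraction (N : ℕ) (hN : 1 ≤ N)
    (S : Set (EuclideanSpace ℝ (Fin N))) (hS : IsCompact S)
    (K : Submodule ℂ (L2Space N))
    (hKset : (K : Set (L2Space N)) = {f : L2Space N | IsBandlimited S f})
    (hK : IsClosed (K : Set (L2Space N)))
    (D : Set (EuclideanSpace ℝ (Fin N))) (hD : MeasurableSet D)
    (hDbdd : Bornology.IsBounded D)
    (n' : ℕ) (ψ : Fin (n' + 1) → L2Space N) (hψmem : ∀ n, IsBandlimited S (ψ n))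
    (hψon : Orthonormal ℂ ψ)
    (lam : Fin (n' + 1) → ℝ) (hlam : ∀ n, lam n ∈ Set.Ioo (0 : ℝ) 1)
    (horder : ∀ n, lam (Fin.last n') ≤ lam n ∧ lam n ≤ lam 0)
    (heig : ∀ n, projOf K hK (chiMul hD (ψ n)) = (lam n : ℂ) • ψ n)
    (μ τ : ℝ) (hμ : 0 < μ) (hτ0 : 0 < τ)
    (hτ : τ ≤ 2 / (lam 0 + lam (Fin.last n') + 2 * μ))
    (h : L2Space N) (hh : h ∈ Submodule.span ℂ (Set.range ψ))
    (hmaps : ∀ f : L2Space N, f ∈ Submodule.span ℂ (Set.range ψ) →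
      TsingleReg K hK hD μ τ h f ∈ Submodule.span ℂ (Set.range ψ)) :
    (∀ f g : L2Space N, f ∈ Submodule.span ℂ (Set.range ψ) →
        g ∈ Submodule.span ℂ (Set.range ψ) →
          ‖TsingleReg K hK hD μ τ h f - TsingleReg K hK hD μ τ h g‖ ≤
            |1 - τ * (lam (Fin.last n') + μ)| * ‖f - g‖) ∧
      |1 - τ * (lam (Fin.last n') + μ)| < 1 :=
  truncated_pswf_regularized_contraction_general N S K hKset hK D hD n' ψ hψmem hψon lam hlam horder
    heig μ τ hμ hτ0 hτ h
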